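/- The interval [0,1] is not a minimality detector for the triangle: letting T ⊂ [0,1]² be the union of the three closed line segments joining (0,0), (1,0), and (0,1), there exists a non-minimal sequence x̄ = (x_1,x_2,...) ∈ T^ℕ such that for every continuous function f : T → [0,1], the sequence (f(x_1),f(x_2),...) ∈ [0,1]^ℕ is minimal. -/

import Mathlib

/-!
Let `μ` be a Toeplitz sequence in `T` made of words of length three: each word is `(v₀, v₁, v₂)`
with one letter `vᵢ` replaced by a point of the opposite edge, and the words run through a dense
set of such choices, each one infinitely often. Toeplitz sequences are minimal, and by density and
closedness `w ++ μ` lies in the orbit closure of `μ` for every such word `w`.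

The sequence `x = (v₀, v₁, v₂) ++ μ` is not minimal: `μ` lies in its orbit closure, but `x` does
not lie in that of `μ`, because every window of three consecutive letters of `μ` has a letter on
the edge opposite to the vertex it would have to approximate. Given a continuous `f : T → [0,1]`,
one of the values `f vᵢ` lies between the other two, which are the values of `f` at the ends of
the edge opposite `vᵢ`; by the intermediate value theorem `f vᵢ = f e` for a point `e` of that
edge. Hence `f ∘ x = f ∘ (w ++ μ)` for the word `w` with `vᵢ` replaced by `e`, the image of a
minimal sequence under a factor map, hence minimal.
-/

open Set unitInterval

/-- The left shift `S` on sequences: `S(x₁,x₂,x₃,…) = (x₂,x₃,…)`. -/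
def shiftSeq {X : Type*} (z : ℕ → X) : ℕ → X := fun n => z (n + 1)

/-- The closure of the forward shift-orbit `{z, Sz, S²z, …}` of a sequence `z`,
inside the sequence space `ℕ → X`.  (For a compact metric space `X` the product
topology on `ℕ → X` is exactly the topology of the metric
`d̄(x̄,ȳ) = ∑ᵢ d(xᵢ,yᵢ)/2ⁱ`.) -/
def shiftOrbitClosure {X : Type*} [TopologicalSpace X] (z : ℕ → X) : Set (ℕ → X) :=
  closure (Set.range fun k => shiftSeq^[k] z)

/-- A sequence `z` is *minimal* if the closure of its shift-orbit is a minimal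
dynamical system under the shift, i.e. every point of this closure has dense
forward orbit in it. -/
def IsMinimalSeq {X : Type*} [TopologicalSpace X] (z : ℕ → X) : Prop :=
  ∀ w ∈ shiftOrbitClosure z, shiftOrbitClosure z ⊆ shiftOrbitClosure w

noncomputable section

/-- The plane with the Euclidean metric. -/
abbrev E2 := EuclideanSpace ℝ (Fin 2)

def p00 : E2 := !₂[0, 0]
def p10 : E2 := !₂[1, 0]
def p01 : E2 := !₂[0, 1]

/-- The triangle: the union of the three closed segments joining
`(0,0)`, `(1,0)` and `(0,1)`, as a subspace of the Euclidean plane. -/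
def triangle : Set E2 := segment ℝ p00 p10 ∪ segment ℝ p00 p01 ∪ segment ℝ p10 p01

lemma shiftSeq_iterate_apply {X : Type*} (z : ℕ → X) (k n : ℕ) :
    shiftSeq^[k] z n = z (n + k) := by
  induction k generalizing z with
  | zero => rfl
  | succ k ih => rw [Function.iterate_succ_apply, ih]; rfl

lemma shiftSeq_iterate_comp {X Y : Type*} (f : X → Y) (z : ℕ → X) (k : ℕ) :
    shiftSeq^[k] (f ∘ z) = f ∘ shiftSeq^[k] z := by
  funext n
  simp only [Function.comp, shiftSeq_iterate_apply]

section ShiftDynamics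

variable {X Y : Type*} [TopologicalSpace X] [TopologicalSpace Y]

lemma continuous_shiftSeq : Continuous (shiftSeq : (ℕ → X) → ℕ → X) :=
  continuous_pi fun n => continuous_apply (n + 1)

lemma iterate_mem_shiftOrbitClosure (z : ℕ → X) (k : ℕ) :
    shiftSeq^[k] z ∈ shiftOrbitClosure z :=
  subset_closure (mem_range_self k)

lemma self_mem_shiftOrbitClosure (z : ℕ → X) : z ∈ shiftOrbitClosure z :=
  iterate_mem_shiftOrbitClosure z 0

lemma shiftOrbitClosure_subset_of_mem {z w : ℕ → X} (hw : w ∈ shiftOrbitClosure z) :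
    shiftOrbitClosure w ⊆ shiftOrbitClosure z := by
  refine closure_minimal (range_subset_iff.2 fun k => ?_) isClosed_closure
  refine map_mem_closure (continuous_shiftSeq.iterate k) hw ?_
  rintro _ ⟨j, rfl⟩
  exact ⟨k + j, Function.iterate_add_apply _ _ _ _⟩

lemma isMinimalSeq_iff {z : ℕ → X} :
    IsMinimalSeq z ↔ ∀ w ∈ shiftOrbitClosure z, z ∈ shiftOrbitClosure w :=
  ⟨fun hz w hw => hz w hw (self_mem_shiftOrbitClosure z),
    fun hz w hw => shiftOrbitClosure_subset_of_mem (hz w hw)⟩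

lemma IsMinimalSeq.of_mem {z w : ℕ → X} (hz : IsMinimalSeq z) (hw : w ∈ shiftOrbitClosure z) :
    IsMinimalSeq w := by
  have heq : shiftOrbitClosure w = shiftOrbitClosure z :=
    (shiftOrbitClosure_subset_of_mem hw).antisymm (hz w hw)
  intro v hv
  rw [heq] at hv ⊢
  exact hz v hv

lemma shiftOrbitClosure_comp [CompactSpace X] [T2Space Y] {f : X → Y} (hf : Continuous f)
    (z : ℕ → X) : shiftOrbitClosure (f ∘ z) = (f ∘ ·) '' shiftOrbitClosure z := by
  have hF : Continuous fun v : ℕ → X => f ∘ v :=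
    continuous_pi fun n => hf.comp (continuous_apply n)
  have hrange : (f ∘ ·) '' range (fun k => shiftSeq^[k] z) =
      range fun k => shiftSeq^[k] (f ∘ z) := by
    rw [← range_comp]
    exact congrArg range (funext fun k => (shiftSeq_iterate_comp f z k).symm)
  rw [shiftOrbitClosure, shiftOrbitClosure,
    image_closure_of_isCompact isClosed_closure.isCompact hF.continuousOn, hrange]

lemma IsMinimalSeq.comp [CompactSpace X] [T2Space Y] {f : X → Y} (hf : Continuous f)
    {z : ℕ → X} (hz : IsMinimalSeq z) : IsMinimalSeq (f ∘ z) := by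
  intro w hw
  rw [shiftOrbitClosure_comp hf] at hw ⊢
  obtain ⟨v, hv, rfl⟩ := hw
  rw [shiftOrbitClosure_comp hf]
  exact image_mono (hz v hv)

lemma mem_closure_of_forall_exists_eqOn {A : Set (ℕ → X)} {z : ℕ → X}
    (h : ∀ N, ∃ v ∈ A, ∀ n ≤ N, v n = z n) : z ∈ closure A := by
  choose v hvA hv using h
  refine mem_closure_of_tendsto (b := Filter.atTop) (tendsto_pi_nhds.2 fun n => ?_)
    (Filter.Eventually.of_forall hvA)
  exact tendsto_const_nhds.congr'
    ((Filter.eventually_ge_atTop n).mono fun N hN => (hv N n hN).symm)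

lemma isMinimalSeq_of_forall_exists_period [T1Space X] {z : ℕ → X}
    (h : ∀ N, ∃ P > 0, ∀ t, ∀ n ≤ N, z (n + P * t) = z n) : IsMinimalSeq z := by
  refine isMinimalSeq_iff.2 fun w hw => mem_closure_of_forall_exists_eqOn fun N => ?_
  obtain ⟨P, hP, hper⟩ := h N
  let F : ℕ → Set (ℕ → X) := fun j => ⋂ n ∈ Iic N, (fun v => v (n + j)) ⁻¹' {z n}
  -- every shift of `z`, shifted a little further, agrees with `z` on `[0, N]`; this closed
  -- condition passes to `w`
  have hF : IsClosed (⋃ j ∈ Iic P, F j) :=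
    (finite_Iic P).isClosed_biUnion fun j _ => isClosed_biInter fun n _ =>
      isClosed_singleton.preimage (continuous_apply _)
  have horbit : range (fun k => shiftSeq^[k] z) ⊆ ⋃ j ∈ Iic P, F j := by
    rintro _ ⟨k, rfl⟩
    have hjk : P - k % P + k = P * (k / P + 1) := by
      have := Nat.div_add_mod k P
      have := Nat.mod_lt k hP
      rw [mul_add, mul_one]
      omega
    refine mem_biUnion (x := P - k % P) (by simp only [mem_Iic]; omega) ?_
    simp only [F, mem_iInter, mem_preimage, mem_singleton_iff, shiftSeq_iterate_apply]
    intro n hn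
    rw [add_assoc, hjk, hper _ n hn]
  obtain ⟨j, -, hj⟩ := mem_iUnion₂.1 (closure_minimal horbit hF hw)
  refine ⟨shiftSeq^[j] w, mem_range_self j, fun n hn => ?_⟩
  simp only [F, mem_iInter, mem_preimage, mem_singleton_iff] at hj
  rw [shiftSeq_iterate_apply, hj n hn]

end ShiftDynamics

lemma padicValNat_add_pow_mul {p : ℕ} [Fact p.Prime] {s a : ℕ} (hs₀ : s ≠ 0)
    (hs : s < p ^ a) (c : ℕ) : padicValNat p (s + p ^ a * c) = padicValNat p s := by
  refine eq_of_forall_le_iff fun k => ?_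
  rw [← padicValNat_dvd_iff_le (by positivity), ← padicValNat_dvd_iff_le hs₀]
  rcases le_or_gt k a with hk | hk
  · exact Nat.dvd_add_left (Dvd.dvd.mul_right (pow_dvd_pow p hk) c)
  · have hpa : p ^ a ∣ p ^ k := pow_dvd_pow p hk.le
    have hs_ndvd : ¬ p ^ a ∣ s := fun h => (Nat.le_of_dvd (Nat.pos_of_ne_zero hs₀) h).not_gt hs
    refine iff_of_false (fun h => hs_ndvd ?_) fun h => hs_ndvd (hpa.trans h)
    exact (Nat.dvd_add_left (dvd_mul_right _ c)).1 (hpa.trans h)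

section Words

variable {X Y : Type*} {L : ℕ}

def prependWord (w : Fin L → X) (z : ℕ → X) (n : ℕ) : X :=
  if h : n < L then w ⟨n, h⟩ else z (n - L)

lemma shiftSeq_iterate_prependWord (w : Fin L → X) (z : ℕ → X) :
    shiftSeq^[L] (prependWord w z) = z := by
  funext n
  rw [shiftSeq_iterate_apply, prependWord, dif_neg (by omega), Nat.add_sub_cancel]

lemma comp_prependWord (f : X → Y) (w : Fin L → X) (z : ℕ → X) :
    f ∘ prependWord w z = prependWord (f ∘ w) (f ∘ z) := by
  funext n
  simp only [Function.comp, prependWord]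
  split_ifs <;> rfl

lemma continuous_prependWord_left [TopologicalSpace X] (z : ℕ → X) :
    Continuous fun w : Fin L → X => prependWord w z :=
  continuous_pi fun n => by
    unfold prependWord
    split_ifs
    exacts [continuous_apply _, continuous_const]

variable [NeZero L]

/-- Block number `t` (of length `L`) carries the word `W (ν₂ (t + 1))`, so the word `W m` recurs
with period `2 ^ (m + 1)` blocks. -/
def toeplitzSeq (W : ℕ → Fin L → X) (n : ℕ) : X :=
  W (padicValNat 2 (n / L + 1)) ⟨n % L, Nat.mod_lt n (NeZero.pos L)⟩

variable (W : ℕ → Fin L → X)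

lemma toeplitzSeq_mul_add (b : ℕ) {c : ℕ} (hc : c < L) :
    toeplitzSeq W (L * b + c) = W (padicValNat 2 (b + 1)) ⟨c, hc⟩ := by
  have hdiv : (L * b + c) / L = b := by
    rw [Nat.mul_add_div (NeZero.pos L), Nat.div_eq_of_lt hc, add_zero]
  have hmod : (L * b + c) % L = c := by rw [Nat.mul_add_mod, Nat.mod_eq_of_lt hc]
  simp only [toeplitzSeq, hdiv, hmod]

lemma toeplitzSeq_add_mul {a n : ℕ} (hn : n / L + 1 < 2 ^ a) (t : ℕ) :
    toeplitzSeq W (n + L * 2 ^ a * t) = toeplitzSeq W n := by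
  have hn' : n + L * 2 ^ a * t = L * (n / L + 2 ^ a * t) + n % L := by
    rw [mul_add, ← mul_assoc]
    have := Nat.div_add_mod n L
    omega
  conv_rhs => rw [← Nat.div_add_mod n L]
  rw [hn', toeplitzSeq_mul_add W _ (Nat.mod_lt n (NeZero.pos L)), toeplitzSeq_mul_add,
    add_right_comm, padicValNat_add_pow_mul (Nat.succ_ne_zero _) hn]

lemma toeplitzSeq_block_add {m n : ℕ} (hn : n < L * 2 ^ m) :
    toeplitzSeq W (L * (2 ^ m - 1) + n) = prependWord (W m) (toeplitzSeq W) n := by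
  unfold prependWord
  split_ifs with h
  · rw [toeplitzSeq_mul_add W _ h, Nat.sub_add_cancel Nat.one_le_two_pow, padicValNat.prime_pow]
  · have hL : L ≤ L * 2 ^ m := Nat.le_mul_of_pos_right L (by positivity)
    have hsplit : L * (2 ^ m - 1) + n = (n - L) + L * 2 ^ m * 1 := by
      rw [Nat.mul_sub_one, mul_one]
      omega
    have hlt : (n - L) / L + 1 < 2 ^ m := by
      have : (n - L) / L < 2 ^ m - 1 := by
        rw [Nat.div_lt_iff_lt_mul (NeZero.pos L), Nat.sub_one_mul, mul_comm (2 ^ m) L]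
        omega
      have := @Nat.one_le_two_pow m
      omega
    rw [hsplit, toeplitzSeq_add_mul W hlt]

lemma prependWord_mem_shiftOrbitClosure_toeplitzSeq [TopologicalSpace X] {w : Fin L → X}
    (hw : ∀ M, ∃ m ≥ M, W m = w) :
    prependWord w (toeplitzSeq W) ∈ shiftOrbitClosure (toeplitzSeq W) := by
  refine mem_closure_of_forall_exists_eqOn fun N => ?_
  obtain ⟨m, hmN, rfl⟩ := hw N
  refine ⟨_, mem_range_self (L * (2 ^ m - 1)), fun n hn => ?_⟩
  rw [shiftSeq_iterate_apply, add_comm, toeplitzSeq_block_add]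
  calc n ≤ m := hn.trans hmN
    _ < 2 ^ m := Nat.lt_two_pow_self
    _ ≤ L * 2 ^ m := Nat.le_mul_of_pos_left _ (NeZero.pos L)

lemma isMinimalSeq_toeplitzSeq [TopologicalSpace X] [T1Space X] :
    IsMinimalSeq (toeplitzSeq W) := by
  refine isMinimalSeq_of_forall_exists_period fun N =>
    ⟨L * 2 ^ (N + 1), Nat.mul_pos (NeZero.pos L) (by positivity), fun t n hn => ?_⟩
  have hn' : n / L + 1 < 2 ^ (N + 1) :=
    (Nat.succ_le_succ ((Nat.div_le_self n L).trans hn)).trans_lt Nat.lt_two_pow_self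
  exact toeplitzSeq_add_mul W hn' t

end Words

lemma isCompact_segment {E : Type*} [AddCommGroup E] [Module ℝ E] [TopologicalSpace E]
    [IsTopologicalAddGroup E] [ContinuousSMul ℝ E] (x y : E) : IsCompact (segment ℝ x y) := by
  rw [segment_eq_image_lineMap]
  exact isCompact_Icc.image AffineMap.lineMap_continuous

instance : CompactSpace triangle :=
  isCompact_iff_compactSpace.mp
    (((isCompact_segment _ _).union (isCompact_segment _ _)).union (isCompact_segment _ _))

lemma p00_mem_triangle : p00 ∈ triangle := Or.inl (Or.inl (left_mem_segment ℝ p00 p10))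
lemma p10_mem_triangle : p10 ∈ triangle := Or.inl (Or.inl (right_mem_segment ℝ p00 p10))
lemma p01_mem_triangle : p01 ∈ triangle := Or.inl (Or.inr (right_mem_segment ℝ p00 p01))

def vertex : Fin 3 → triangle :=
  ![⟨p00, p00_mem_triangle⟩, ⟨p10, p10_mem_triangle⟩, ⟨p01, p01_mem_triangle⟩]

lemma segment_vertex_subset_triangle (i : Fin 3) :
    segment ℝ (vertex (i + 1) : E2) (vertex (i + 2)) ⊆ triangle := by
  fin_cases i
  · exact subset_union_right
  · rw [segment_symm]
    exact subset_union_right.trans subset_union_left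
  · exact subset_union_left.trans subset_union_left

def edgePoint (i : Fin 3) (s : I) : triangle :=
  ⟨(1 - (s : ℝ)) • (vertex (i + 1) : E2) + (s : ℝ) • (vertex (i + 2) : E2),
    segment_vertex_subset_triangle i ⟨1 - s, s, by linarith [s.2.2], s.2.1, by ring, rfl⟩⟩

lemma continuous_edgePoint (i : Fin 3) : Continuous (edgePoint i) :=
  Continuous.subtype_mk (by fun_prop) _

lemma edgePoint_zero (i : Fin 3) : edgePoint i 0 = vertex (i + 1) :=
  Subtype.ext (by simp [edgePoint])

lemma edgePoint_one (i : Fin 3) : edgePoint i 1 = vertex (i + 2) :=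
  Subtype.ext (by simp [edgePoint])

/-- Barycentric coordinates with respect to `p00`, `p10`, `p01`. -/
def bary : Fin 3 → E2 → ℝ := ![fun p => 1 - p 0 - p 1, fun p => p 0, fun p => p 1]

lemma continuous_bary (j : Fin 3) : Continuous (bary j) := by
  fin_cases j <;>
    simp only [bary, Fin.zero_eta, Fin.mk_one, Fin.reduceFinMk, Matrix.cons_val_zero,
      Matrix.cons_val_one, Matrix.cons_val] <;> fun_prop

lemma bary_vertex (i j : Fin 3) : bary j (vertex i) = if i = j then 1 else 0 := by
  fin_cases i <;> fin_cases j <;> simp [bary, vertex, p00, p10, p01]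

lemma bary_edgePoint_self (i : Fin 3) (s : I) : bary i (edgePoint i s) = 0 := by
  fin_cases i <;> simp [bary, edgePoint, vertex, p00, p10, p01]

lemma exists_mem_uIcc_of_fin_three {α : Type*} [LinearOrder α] (G : Fin 3 → α) :
    ∃ i, G i ∈ uIcc (G (i + 1)) (G (i + 2)) := by
  by_contra! h
  have h0 := h 0
  have h1 := h 1
  have h2 := h 2
  simp only [mem_uIcc] at h0 h1 h2
  grind

lemma exists_apply_edgePoint_eq_apply_vertex {α : Type*} [LinearOrder α] [TopologicalSpace α]
    [OrderClosedTopology α] {f : triangle → α} (hf : Continuous f) :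
    ∃ i s, f (edgePoint i s) = f (vertex i) := by
  obtain ⟨i, hi⟩ := exists_mem_uIcc_of_fin_three (f ∘ vertex)
  have hcont : Continuous fun s => f (edgePoint i s) := hf.comp (continuous_edgePoint i)
  have hivt :
      uIcc (f (edgePoint i 0)) (f (edgePoint i 1)) ⊆ range fun s => f (edgePoint i s) := by
    rcases le_total (f (edgePoint i 0)) (f (edgePoint i 1)) with h | h
    · rw [uIcc_of_le h]
      exact intermediate_value_univ 0 1 hcont
    · rw [uIcc_of_ge h]
      exact intermediate_value_univ 1 0 hcont
  rw [edgePoint_zero, edgePoint_one] at hivt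
  obtain ⟨s, hs⟩ := hivt hi
  exact ⟨i, s, hs⟩

def planted (p : Fin 3 × I) : Fin 3 → triangle := Function.update vertex p.1 (edgePoint p.1 p.2)

lemma continuous_planted : Continuous planted :=
  continuous_prod_of_discrete_left.2 fun i => continuous_pi fun c => by
    simp only [planted, Function.update_apply]
    split_ifs with h
    · subst h
      exact continuous_edgePoint c
    · exact continuous_const

/-- A window starting at a block boundary contains the planted letter; any other window meets
two blocks, one of which puts an unplanted vertex into a slot where `bary` vanishes on it. -/
lemma exists_bary_toeplitzSeq_planted_eq_zero (q : ℕ → Fin 3 × I) (k : ℕ) :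
    ∃ j : Fin 3, bary j (toeplitzSeq (planted ∘ q) (k + j) : triangle) = 0 := by
  obtain ⟨b, r, hr, rfl⟩ : ∃ b r, r < 3 ∧ k = 3 * b + r :=
    ⟨k / 3, k % 3, Nat.mod_lt _ (by norm_num), (Nat.div_add_mod k 3).symm⟩
  set i := (q (padicValNat 2 (b + 1))).1 with hi
  set i' := (q (padicValNat 2 (b + 1 + 1))).1 with hi'
  interval_cases r
  · refine ⟨i, ?_⟩
    rw [add_zero, toeplitzSeq_mul_add _ _ i.isLt]
    simp [planted, ← hi, bary_edgePoint_self]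
  · by_cases h : i = 1
    · refine ⟨1, ?_⟩
      rw [show 3 * b + 1 + ((1 : Fin 3) : ℕ) = 3 * b + 2 from rfl,
        toeplitzSeq_mul_add _ _ (by norm_num)]
      simp [planted, ← hi, h, bary_vertex]
    · refine ⟨0, ?_⟩
      rw [show 3 * b + 1 + ((0 : Fin 3) : ℕ) = 3 * b + 1 from rfl,
        toeplitzSeq_mul_add _ _ (by norm_num)]
      simp [planted, ← hi, Ne.symm h, bary_vertex]
  · by_cases h : i' = 0
    · refine ⟨2, ?_⟩
      rw [show 3 * b + 2 + ((2 : Fin 3) : ℕ) = 3 * (b + 1) + 1 from rfl,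
        toeplitzSeq_mul_add _ _ (by norm_num)]
      simp [planted, ← hi', h, bary_vertex]
    · refine ⟨1, ?_⟩
      rw [show 3 * b + 2 + ((1 : Fin 3) : ℕ) = 3 * (b + 1) + 0 from rfl,
        toeplitzSeq_mul_add _ _ (by norm_num)]
      simp [planted, ← hi', Ne.symm h, bary_vertex]

/-- `m.unpair.1` takes every value infinitely often, so every word `planted (denseSeq _ j)`
recurs in `triangleToeplitz`. -/
def triangleToeplitz : ℕ → triangle :=
  toeplitzSeq (planted ∘ fun m => TopologicalSpace.denseSeq (Fin 3 × I) m.unpair.1)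

lemma prependWord_planted_mem_shiftOrbitClosure (p : Fin 3 × I) :
    prependWord (planted p) triangleToeplitz ∈ shiftOrbitClosure triangleToeplitz := by
  refine (TopologicalSpace.denseRange_denseSeq _).induction_on p (isClosed_closure.preimage
    ((continuous_prependWord_left _).comp continuous_planted)) fun j => ?_
  refine prependWord_mem_shiftOrbitClosure_toeplitzSeq _ fun M =>
    ⟨Nat.pair j M, Nat.right_le_pair j M, ?_⟩
  simp only [Function.comp_apply, Nat.unpair_pair]

lemma shiftOrbitClosure_triangleToeplitz_subset :
    shiftOrbitClosure triangleToeplitz ⊆ {z | ∃ j : Fin 3, bary j (z j : triangle) = 0} := by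
  refine closure_minimal (range_subset_iff.2 fun k => ?_) ?_
  · simpa only [mem_ofPred_eq, shiftSeq_iterate_apply, add_comm, triangleToeplitz]
      using exists_bary_toeplitzSeq_planted_eq_zero _ k
  · simp only [ofPred_exists]
    exact isClosed_iUnion_of_finite fun j => isClosed_eq ((continuous_bary j).comp
      (continuous_subtype_val.comp (continuous_apply _))) continuous_const

lemma not_isMinimalSeq_prependWord_vertex :
    ¬ IsMinimalSeq (prependWord vertex triangleToeplitz) := by
  rw [isMinimalSeq_iff]
  push Not
  refine ⟨triangleToeplitz, ?_, fun h => ?_⟩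
  · simpa only [shiftSeq_iterate_prependWord]
      using iterate_mem_shiftOrbitClosure (prependWord vertex triangleToeplitz) 3
  · obtain ⟨j, hj⟩ := shiftOrbitClosure_triangleToeplitz_subset h
    simp [prependWord, bary_vertex] at hj

/-- `[0,1]` is not a minimality detector for the triangle: there is a
non-minimal sequence in the triangle whose image under every continuous
`f : T → [0,1]` is minimal. -/
theorem unitInterval_not_minimality_detector_for_triangle :
    ∃ x : ℕ → triangle, ¬ IsMinimalSeq x ∧
      ∀ f : triangle → I, Continuous f → IsMinimalSeq (fun n => f (x n)) := by
  refine ⟨prependWord vertex triangleToeplitz, not_isMinimalSeq_prependWord_vertex,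
    fun f hf => ?_⟩
  obtain ⟨i, s, hfis⟩ := exists_apply_edgePoint_eq_apply_vertex hf
  have hword : f ∘ planted (i, s) = f ∘ vertex := by
    rw [planted, Function.comp_update, hfis]
    exact Function.update_eq_self i (f ∘ vertex)
  have hmin : IsMinimalSeq (prependWord (planted (i, s)) triangleToeplitz) :=
    (isMinimalSeq_toeplitzSeq _).of_mem (prependWord_planted_mem_shiftOrbitClosure (i, s))
  have hfmin := hmin.comp hf
  rwa [comp_prependWord, hword, ← comp_prependWord] at hfmin

end
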